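/- The discrete Lagrange–d'Alembert principle is equivalent to the forced discrete Euler–Lagrange equations: for a discrete trajectory q_0, …, q_N in ℝⁿ, one has δS_d(q; v) + W(q; v) = 0 for every variation v_0, …, v_N with v_0 = v_N = 0 if and only if ∇₁L_d(q_k, q_{k+1}) + ∇₂L_d(q_{k−1}, q_k) + Q⁻(q_k, q_{k+1}) + Q⁺(q_{k−1}, q_k) = 0 for every k ∈ {1, …, N−1}. -/

import Mathlib

/-!
Differentiating the action termwise and shifting the index in the terms paired with `v (k + 1)`
(summation by parts, with no boundary terms because `v 0 = v N = 0`) turns `δS_d(q; v) + W(q; v)`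
into `∑ₖ ⟪E_k, v_k⟫`, where `E_k` is the forced discrete Euler–Lagrange expression.
Testing with the variation equal to `E_k` at the single interior node `k` and zero elsewhere
gives `‖E_k‖² = 0`.
-/

open scoped RealInnerProductSpace
open Finset

theorem Finset.sum_range_succ_eq_sum_range_of_eq_zero {M : Type*} [AddCommMonoid M]
    {g : ℕ → M} {N : ℕ} (h₀ : g 0 = 0) (hN : g N = 0) :
    ∑ k ∈ range N, g (k + 1) = ∑ k ∈ range N, g k := by
  rw [← add_zero (∑ k ∈ range N, g (k + 1)), ← h₀, ← sum_range_succ', sum_range_succ, hN,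
    add_zero]

section

variable {F : Type*}

def discreteAction (N : ℕ) (L : F → F → ℝ) (q : ℕ → F) : ℝ :=
  ∑ k ∈ range N, L (q k) (q (k + 1))

variable [NormedAddCommGroup F] [InnerProductSpace ℝ F]

def discreteVirtualWork (N : ℕ) (Qminus Qplus : F → F → F) (q v : ℕ → F) : ℝ :=
  ∑ k ∈ range N, (⟪Qminus (q k) (q (k + 1)), v k⟫ + ⟪Qplus (q k) (q (k + 1)), v (k + 1)⟫)

theorem forall_sum_inner_eq_zero_iff {E : ℕ → F} {N : ℕ} :
    (∀ v : ℕ → F, v 0 = 0 → v N = 0 → ∑ k ∈ range N, ⟪E k, v k⟫ = 0) ↔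
      ∀ k, 1 ≤ k → k < N → E k = 0 := by
  constructor
  · intro h k hk₁ hkN
    have hsum := h (Pi.single k (E k)) (Pi.single_eq_of_ne (by omega) _)
      (Pi.single_eq_of_ne (by omega) _)
    rwa [sum_eq_single_of_mem k (mem_range.2 hkN) fun j _ hjk => by simp [hjk],
      Pi.single_eq_same, inner_self_eq_zero] at hsum
  · intro h v h₀ _
    refine sum_eq_zero fun k hk => ?_
    rcases Nat.eq_zero_or_pos k with rfl | hk₁
    · rw [h₀, inner_zero_right]
    · rw [h k hk₁ (mem_range.1 hk), inner_zero_left]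

theorem sum_inner_add_inner_succ_eq_sum_inner {A B : ℕ → F} {v : ℕ → F} {N : ℕ}
    (h₀ : v 0 = 0) (hN : v N = 0) :
    ∑ k ∈ range N, (⟪A k, v k⟫ + ⟪B (k + 1), v (k + 1)⟫) = ∑ k ∈ range N, ⟪A k + B k, v k⟫ := by
  rw [sum_add_distrib, sum_range_succ_eq_sum_range_of_eq_zero (g := fun k => ⟪B k, v k⟫)
    (by simp [h₀]) (by simp [hN]), ← sum_add_distrib]
  simp only [inner_add_left]

variable [CompleteSpace F]

/-- At `k = 0` the truncated `k - 1` makes this junk; it is only ever paired with `v 0 = 0`. -/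
noncomputable def forcedEulerLagrange (L : F → F → ℝ) (Qminus Qplus : F → F → F) (q : ℕ → F)
    (k : ℕ) : F :=
  gradient (fun x => L x (q (k + 1))) (q k) + gradient (fun y => L (q (k - 1)) y) (q k)
    + Qminus (q k) (q (k + 1)) + Qplus (q (k - 1)) (q k)

theorem inner_gradient_fst_eq_fderiv {L : F → F → ℝ} {a b : F}
    (hL : DifferentiableAt ℝ (fun p : F × F => L p.1 p.2) (a, b)) (u : F) :
    ⟪gradient (fun x => L x b) a, u⟫ = fderiv ℝ (fun p : F × F => L p.1 p.2) (a, b) (u, 0) := by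
  rw [inner_gradient_left]
  exact DFunLike.congr_fun
    (hL.hasFDerivAt.comp a (hasFDerivAt_prodMk_left (𝕜 := ℝ) a b)).fderiv u

theorem inner_gradient_snd_eq_fderiv {L : F → F → ℝ} {a b : F}
    (hL : DifferentiableAt ℝ (fun p : F × F => L p.1 p.2) (a, b)) (w : F) :
    ⟪gradient (fun y => L a y) b, w⟫ = fderiv ℝ (fun p : F × F => L p.1 p.2) (a, b) (0, w) := by
  rw [inner_gradient_left]
  exact DFunLike.congr_fun
    (hL.hasFDerivAt.comp b (hasFDerivAt_prodMk_right (𝕜 := ℝ) a b)).fderiv w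

theorem hasDerivAt_apply_add_smul {L : F → F → ℝ} {a b : F}
    (hL : DifferentiableAt ℝ (fun p : F × F => L p.1 p.2) (a, b)) (u w : F) :
    HasDerivAt (fun ε : ℝ => L (a + ε • u) (b + ε • w))
      (⟪gradient (fun x => L x b) a, u⟫ + ⟪gradient (fun y => L a y) b, w⟫) 0 := by
  have hline : HasDerivAt (fun ε : ℝ => (a + ε • u, b + ε • w)) (u, w) 0 := by
    simpa using (((hasDerivAt_id (0 : ℝ)).smul_const u).const_add a).prodMk
      (((hasDerivAt_id (0 : ℝ)).smul_const w).const_add b)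
  rw [inner_gradient_fst_eq_fderiv hL, inner_gradient_snd_eq_fderiv hL, ← map_add,
    Prod.mk_add_mk, add_zero, zero_add]
  exact hL.hasFDerivAt.comp_hasDerivAt_of_eq 0 hline (by simp)

theorem hasDerivAt_discreteAction {L : F → F → ℝ}
    (hL : Differentiable ℝ (fun p : F × F => L p.1 p.2)) (N : ℕ) (q v : ℕ → F) :
    HasDerivAt (fun ε : ℝ => discreteAction N L (q + ε • v))
      (∑ k ∈ range N, (⟪gradient (fun x => L x (q (k + 1))) (q k), v k⟫
        + ⟪gradient (fun y => L (q k) y) (q (k + 1)), v (k + 1)⟫)) 0 :=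
  HasDerivAt.fun_sum fun k _ => hasDerivAt_apply_add_smul (hL _) (v k) (v (k + 1))

theorem deriv_discreteAction_add_discreteVirtualWork {L : F → F → ℝ}
    (hL : Differentiable ℝ (fun p : F × F => L p.1 p.2)) (Qminus Qplus : F → F → F)
    {N : ℕ} {q v : ℕ → F} (h₀ : v 0 = 0) (hN : v N = 0) :
    deriv (fun ε : ℝ => discreteAction N L (q + ε • v)) 0
        + discreteVirtualWork N Qminus Qplus q v
      = ∑ k ∈ range N, ⟪forcedEulerLagrange L Qminus Qplus q k, v k⟫ := by
  rw [(hasDerivAt_discreteAction hL N q v).deriv, discreteVirtualWork, ← sum_add_distrib]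
  let A k := gradient (fun x => L x (q (k + 1))) (q k) + Qminus (q k) (q (k + 1))
  let B k := gradient (fun y => L (q (k - 1)) y) (q k) + Qplus (q (k - 1)) (q k)
  calc _ = ∑ k ∈ range N, (⟪A k, v k⟫ + ⟪B (k + 1), v (k + 1)⟫) :=
        sum_congr rfl fun k _ => by simp only [A, B, Nat.add_sub_cancel, inner_add_left]; ring
    _ = ∑ k ∈ range N, ⟪A k + B k, v k⟫ := sum_inner_add_inner_succ_eq_sum_inner h₀ hN
    _ = _ := sum_congr rfl fun k _ => by rw [forcedEulerLagrange]; congr 1; simp only [A, B]; abel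

end

theorem discrete_lagrange_dalembert_iff_forced_euler_lagrange_general {n N : ℕ}
    (L : EuclideanSpace ℝ (Fin n) → EuclideanSpace ℝ (Fin n) → ℝ)
    (hL : Differentiable ℝ
      (fun p : EuclideanSpace ℝ (Fin n) × EuclideanSpace ℝ (Fin n) => L p.1 p.2))
    (Qminus Qplus : EuclideanSpace ℝ (Fin n) → EuclideanSpace ℝ (Fin n) →
      EuclideanSpace ℝ (Fin n))
    (q : ℕ → EuclideanSpace ℝ (Fin n)) :
    (∀ v : ℕ → EuclideanSpace ℝ (Fin n), v 0 = 0 → v N = 0 →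
      deriv (fun ε : ℝ =>
          ∑ k ∈ Finset.range N, L (q k + ε • v k) (q (k + 1) + ε • v (k + 1))) 0
        + ∑ k ∈ Finset.range N,
            (⟪Qminus (q k) (q (k + 1)), v k⟫ + ⟪Qplus (q k) (q (k + 1)), v (k + 1)⟫)
        = 0)
    ↔ (∀ k, 1 ≤ k → k < N →
        gradient (fun x => L x (q (k + 1))) (q k)
          + gradient (fun y => L (q (k - 1)) y) (q k)
          + Qminus (q k) (q (k + 1)) + Qplus (q (k - 1)) (q k) = 0) := by
  refine Iff.trans ?_ (forall_sum_inner_eq_zero_iff (E := forcedEulerLagrange L Qminus Qplus q))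
  refine forall_congr' fun v => forall_congr' fun h₀ => forall_congr' fun hN => ?_
  rw [← deriv_discreteAction_add_discreteVirtualWork hL Qminus Qplus h₀ hN]
  rfl

/-- The discrete Lagrange–d'Alembert principle is equivalent to the forced
discrete Euler–Lagrange equations: `δS_d(q; v) + W(q; v) = 0` for every
variation `v` with `v 0 = v N = 0` if and only if
`∇₁L(q_k, q_{k+1}) + ∇₂L(q_{k-1}, q_k) + Q⁻(q_k, q_{k+1}) + Q⁺(q_{k-1}, q_k) = 0`
for every `k ∈ {1, …, N-1}`. -/
theorem discrete_lagrange_dalembert_iff_forced_euler_lagrange {n N : ℕ} (hN : 1 ≤ N)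
    (L : EuclideanSpace ℝ (Fin n) → EuclideanSpace ℝ (Fin n) → ℝ)
    (hL : Differentiable ℝ
      (fun p : EuclideanSpace ℝ (Fin n) × EuclideanSpace ℝ (Fin n) => L p.1 p.2))
    (Qminus Qplus : EuclideanSpace ℝ (Fin n) → EuclideanSpace ℝ (Fin n) →
      EuclideanSpace ℝ (Fin n))
    (q : ℕ → EuclideanSpace ℝ (Fin n)) :
    (∀ v : ℕ → EuclideanSpace ℝ (Fin n), v 0 = 0 → v N = 0 →
      deriv (fun ε : ℝ =>
          ∑ k ∈ Finset.range N, L (q k + ε • v k) (q (k + 1) + ε • v (k + 1))) 0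
        + ∑ k ∈ Finset.range N,
            (⟪Qminus (q k) (q (k + 1)), v k⟫ + ⟪Qplus (q k) (q (k + 1)), v (k + 1)⟫)
        = 0)
    ↔ (∀ k, 1 ≤ k → k < N →
        gradient (fun x => L x (q (k + 1))) (q k)
          + gradient (fun y => L (q (k - 1)) y) (q k)
          + Qminus (q k) (q (k + 1)) + Qplus (q (k - 1)) (q k) = 0) :=
  discrete_lagrange_dalembert_iff_forced_euler_lagrange_general L hL Qminus Qplus q
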